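/- arXiv:2308.07422 — 4 statements merged into one kernel-verified Lean document; each statement's English description precedes it below -/
import Mathlib

section
/- Let y_1,...,y_n be nonnegative reals with y_1 + ... + y_n = 1. For each positive integer N, let G_N be the disjoint union over i of complete graphs on ⌊y_i^{1/4} N⌋ + 1 vertices. Then for every integer j ≥ 2, the ratio hom(C_{4j};G_N)/hom(C_4;G_N)^j converges to Σ_i y_i^j as N → ∞. -/
/-!
A homomorphism `C_m → G` is a closed walk of length `m`, so `hom(C_m; G) = tr A_G^m`. The adjacency
matrix of a disjoint union is block diagonal, and that of `K_{s+1}` is `J - 1` with `J² = (s+1) J`,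
whence `tr (J - 1)^m = s^m + s (-1)^m`. For `G_N` this gives `hom(C_{4j}; G_N) ≈ N^{4j} Σ y_i^j` and
`hom(C_4; G_N) ≈ N^4 Σ y_i = N^4`, and the powers of `N` cancel in the ratio.
-/

open SimpleGraph

/-- The number of graph homomorphisms from `H` to `G`. -/
noncomputable def homCount {α β : Type*} (H : SimpleGraph α) (G : SimpleGraph β) : ℕ :=
  Nat.card (H →g G)

/-- The disjoint union of complete graphs `K_{m i}`, `i = 1, …, n`. -/
def disjointUnionCompletes (n : ℕ) (m : Fin n → ℕ) : SimpleGraph (Σ i : Fin n, Fin (m i)) where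
  Adj a b := a.1 = b.1 ∧ a ≠ b
  symm := by constructor; rintro a b ⟨h1, h2⟩; exact ⟨h1.symm, h2.symm⟩
  loopless := by constructor; rintro a ⟨_, h⟩; exact h rfl

open Filter Topology Finset

namespace Matrix

variable {V R : Type*} [Fintype V] [DecidableEq V] [CommSemiring R]

theorem pow_succ_apply_eq_sum_prod (M : Matrix V V R) (m : ℕ) (u w : V) :
    (M ^ (m + 1)) u w =
      ∑ f : Fin m → V, ∏ k, M ((Fin.cons u f : Fin (m + 1) → V) k)
        ((Fin.snoc f w : Fin (m + 1) → V) k) := by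
  induction m generalizing w with
  | zero => simp [Fin.snoc]
  | succ m ih =>
    rw [pow_succ, mul_apply, ← (Fin.snocEquiv fun _ => V).sum_comp, Fintype.sum_prod_type]
    refine sum_congr rfl fun v _ => ?_
    simp [Fin.snocEquiv, ih, sum_mul, Fin.prod_univ_castSucc, Fin.cons_snoc_eq_snoc_cons]

theorem trace_pow_succ_eq_sum_prod (M : Matrix V V R) (m : ℕ) :
    trace (M ^ (m + 1)) = ∑ g : Fin (m + 1) → V, ∏ k, M (g k) (g (k + 1)) := by
  have hrot (g : Fin (m + 1) → V) (k : Fin (m + 1)) :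
      (Fin.snoc (Fin.tail g) (g 0) : Fin (m + 1) → V) k = g (k + 1) := by
    induction k using Fin.lastCases with
    | last => simp
    | cast i => simp [Fin.tail, Fin.coeSucc_eq_succ]
  simp only [trace, diag, pow_succ_apply_eq_sum_prod]
  rw [← (Fin.consEquiv fun _ => V).sum_comp, Fintype.sum_prod_type]
  simp [Fin.consEquiv, ← hrot]

end Matrix

namespace SimpleGraph

variable {V : Type*}

def cycleGraphHomEquiv (G : SimpleGraph V) (m : ℕ) :
    (cycleGraph (m + 2) →g G) ≃ {g : Fin (m + 2) → V // ∀ k, G.Adj (g k) (g (k + 1))} where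
  toFun f := ⟨f, fun k => f.map_adj (by simp [cycleGraph_adj])⟩
  invFun g := ⟨g.1, fun {u v} huv => by
    rcases cycleGraph_adj.mp huv with h | h
    · rw [sub_eq_iff_eq_add'.mp h]; exact (g.2 v).symm
    · rw [sub_eq_iff_eq_add'.mp h]; exact g.2 u⟩

theorem natCast_homCount_cycleGraph {R : Type*} [CommSemiring R] [Fintype V] [DecidableEq V]
    (G : SimpleGraph V) [DecidableRel G.Adj] {m : ℕ} (hm : 2 ≤ m) :
    (homCount (cycleGraph m) G : R) = (G.adjMatrix R ^ m).trace := by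
  obtain ⟨m, rfl⟩ := Nat.exists_eq_add_of_le' hm
  rw [homCount, Nat.card_congr (G.cycleGraphHomEquiv m), Nat.card_eq_fintype_card,
    Fintype.card_subtype, natCast_card_filter, Matrix.trace_pow_succ_eq_sum_prod]
  simp [adjMatrix_apply, prod_boole]

theorem trace_adjMatrix_completeGraph_pow {R : Type*} [CommRing R] [Fintype V] [DecidableEq V]
    (m : ℕ) :
    ((completeGraph V).adjMatrix R ^ m).trace =
      ((Fintype.card V : R) - 1) ^ m + ((Fintype.card V : R) - 1) * (-1) ^ m := by
  set t : R := (Fintype.card V : R)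
  set J : Matrix V V R := Matrix.of 1
  have hJJ : J * J = t • J := by ext; simp [J, t, Matrix.mul_apply]
  -- `a = ((t - 1) ^ m - (-1) ^ m) / t`, pinned down without dividing by `t`
  have hJpow : ∀ m : ℕ, ∃ a : R, a * t = (t - 1) ^ m - (-1) ^ m ∧
      (J - 1) ^ m = a • J + (-1 : R) ^ m • 1 := by
    intro m
    induction m with
    | zero => exact ⟨0, by simp⟩
    | succ m ih =>
      obtain ⟨a, hat, hpow⟩ := ih
      refine ⟨(t - 1) * a + (-1) ^ m, by linear_combination (t - 1) * hat, ?_⟩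
      rw [pow_succ, hpow]
      simp only [mul_sub, add_mul, smul_mul_assoc, hJJ, mul_one, one_mul, smul_smul, pow_succ]
      module
  obtain ⟨a, hat, hpow⟩ := hJpow m
  have htrJ : J.trace = t := by simp [J, t, Matrix.trace]
  rw [adjMatrix_completeGraph_eq_of_one_sub_one, hpow, Matrix.trace_add, Matrix.trace_smul,
    Matrix.trace_smul, htrJ, Matrix.trace_one, smul_eq_mul, smul_eq_mul, hat]
  ring

end SimpleGraph

instance (n : ℕ) (m : Fin n → ℕ) : DecidableRel (disjointUnionCompletes n m).Adj :=
  fun a b => inferInstanceAs (Decidable (a.1 = b.1 ∧ a ≠ b))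

theorem adjMatrix_disjointUnionCompletes {R : Type*} [Zero R] [One R] (n : ℕ) (m : Fin n → ℕ) :
    (disjointUnionCompletes n m).adjMatrix R =
      Matrix.blockDiagonal' fun i => (completeGraph (Fin (m i))).adjMatrix R := by
  ext ⟨i, a⟩ ⟨j, b⟩
  rw [adjMatrix_apply, Matrix.blockDiagonal'_apply]
  by_cases hij : i = j
  · subst hij
    simp [disjointUnionCompletes]
  · simp [disjointUnionCompletes, hij]

theorem natCast_homCount_cycleGraph_disjointUnionCompletes {R : Type*} [CommRing R] {m : ℕ}
    (hm : 2 ≤ m) (n : ℕ) (s : Fin n → ℕ) :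
    (homCount (cycleGraph m) (disjointUnionCompletes n fun i => s i + 1) : R) =
      ∑ i, ((s i : R) ^ m + s i * (-1) ^ m) := by
  rw [natCast_homCount_cycleGraph _ hm, adjMatrix_disjointUnionCompletes,
    ← Matrix.blockDiagonal'_pow, Matrix.trace_blockDiagonal']
  refine sum_congr rfl fun i _ => ?_
  rw [Pi.pow_apply, trace_adjMatrix_completeGraph_pow, Fintype.card_fin, Nat.cast_add_one,
    add_sub_cancel_right]

theorem tendsto_sum_floor_pow_add_div_pow {ι : Type*} [Fintype ι] {x : ι → ℝ}
    (hx : ∀ i, 0 ≤ x i) {k : ℕ} (hk : 2 ≤ k) :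
    Tendsto (fun N : ℕ => (∑ i, ((⌊x i * N⌋₊ : ℝ) ^ k + ⌊x i * N⌋₊)) / (N : ℝ) ^ k)
      atTop (𝓝 (∑ i, x i ^ k)) := by
  obtain ⟨l, rfl⟩ : ∃ l, k = l + 1 := ⟨k - 1, by omega⟩
  have hfloor (i : ι) : Tendsto (fun N : ℕ => (⌊x i * N⌋₊ : ℝ) / N) atTop (𝓝 (x i)) :=
    (tendsto_nat_floor_mul_div_atTop (hx i)).comp tendsto_natCast_atTop_atTop
  have hinv : Tendsto (fun N : ℕ => (N : ℝ)⁻¹ ^ l) atTop (𝓝 0) := by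
    simpa [zero_pow (by omega : l ≠ 0)] using
      (tendsto_inv_atTop_zero (𝕜 := ℝ) |>.comp tendsto_natCast_atTop_atTop).pow l
  have hsum := tendsto_finsetSum Finset.univ fun i _ =>
    ((hfloor i).pow (l + 1)).add ((hfloor i).mul hinv)
  simp only [mul_zero, add_zero] at hsum
  refine hsum.congr fun N => ?_
  rw [Finset.sum_div]
  refine Finset.sum_congr rfl fun i _ => ?_
  rw [div_pow, add_div, inv_pow, ← div_eq_mul_inv, div_div, ← pow_succ']

/-- For nonnegative reals `y_1,…,y_n` summing to `1`, letting `G_N` be the disjoint union of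
complete graphs on `⌊y_i^{1/4} N⌋ + 1` vertices, the ratio `hom(C_{4j};G_N)/hom(C_4;G_N)^j`
converges to `Σ_i y_i^j` as `N → ∞`, for every `j ≥ 2`. -/
theorem cycle_ratio_tendsto_powerSum {n : ℕ} (y : Fin n → ℝ)
    (hy : ∀ i, 0 ≤ y i) (hsum : ∑ i, y i = 1) (j : ℕ) (hj : 2 ≤ j) :
    Filter.Tendsto
      (fun N : ℕ =>
        (homCount (cycleGraph (4 * j))
            (disjointUnionCompletes n (fun i => ⌊(y i) ^ ((1 : ℝ) / 4) * N⌋₊ + 1)) : ℝ) /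
          (homCount (cycleGraph 4)
            (disjointUnionCompletes n (fun i => ⌊(y i) ^ ((1 : ℝ) / 4) * N⌋₊ + 1)) : ℝ) ^ j)
      Filter.atTop (nhds (∑ i, y i ^ j)) := by
  set x : Fin n → ℝ := fun i => y i ^ ((1 : ℝ) / 4)
  have hx (i : Fin n) : 0 ≤ x i := Real.rpow_nonneg (hy i) _
  have hx4 (i : Fin n) : x i ^ 4 = y i := by
    simpa [x, one_div] using Real.rpow_inv_natCast_pow (hy i) four_ne_zero
  have hnum := tendsto_sum_floor_pow_add_div_pow hx (k := 4 * j) (by omega)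
  have hden := tendsto_sum_floor_pow_add_div_pow hx (k := 4) (by norm_num)
  simp only [hx4, hsum] at hden
  have hlim : (∑ i, x i ^ (4 * j)) / 1 ^ j = ∑ i, y i ^ j := by simp [pow_mul, hx4]
  have hratio := hlim ▸ hnum.div (hden.pow j) (by norm_num)
  refine hratio.congr' ?_
  filter_upwards [eventually_ne_atTop 0] with N hN
  have hNpow : (N : ℝ) ^ (4 * j) ≠ 0 := pow_ne_zero _ (Nat.cast_ne_zero.mpr hN)
  have hsign : (-1 : ℝ) ^ (4 * j) = 1 := by rw [pow_mul]; norm_num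
  rw [Pi.div_apply, div_pow _ ((N : ℝ) ^ 4), ← pow_mul, div_div_div_cancel_right₀ hNpow,
    natCast_homCount_cycleGraph_disjointUnionCompletes (by omega),
    natCast_homCount_cycleGraph_disjointUnionCompletes (by norm_num)]
  norm_num [hsign, x]
end

section
/- The hyperstar ratio profile equals the power-sum profile: the closure of the set of points ( hom(S^(k)_{2k};G)/hom(S^(k)_k;G)^2, ..., hom(S^(k)_{ℓk};G)/hom(S^(k)_k;G)^ℓ ) over all k-uniform hypergraphs G with hom(S^(k)_k;G) ≠ 0 equals Π_ℓ. -/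
/-!
Sorting homomorphisms from a hyperstar by the image of its center and counting each branch
separately gives `hom(S_b; G) = (k - 1)! ^ b * ∑_v d(v) ^ b`. Hence every hyperstar ratio point is
the power-sum vector of the probability vector `x_v ∝ d(v) ^ k`. Conversely, for `x` in the simplex
and `y_i = x_i ^ (1 / k)`, the flower with `⌈N y_i⌉` petals at center `i` has these degrees at
the centers and `O(N)` further vertices of degree one, which are negligible against `N ^ b`; so
its ratio points converge to the power sums of `x`.
-/

/-- The edge set of the `k`-uniform hyperstar with `b` branches: `b` hyperedges of size `k`
all sharing the single center vertex `none` and otherwise disjoint. -/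
def hyperstarEdges (k b : ℕ) : Finset (Finset (Option (Fin b × Fin (k - 1)))) :=
  Finset.image (fun t : Fin b =>
    insert none ((Finset.univ : Finset (Fin (k - 1))).image (fun s => some (t, s))))
    Finset.univ

/-- The number of homomorphisms between hypergraphs given by their edge sets: maps of
vertices sending (the image of) every hyperedge of the source onto a hyperedge of the
target. -/
noncomputable def hypHomCount {VH VG : Type*} [DecidableEq VG]
    (EH : Finset (Finset VH)) (EG : Finset (Finset VG)) : ℕ :=
  Nat.card {f : VH → VG // ∀ e ∈ EH, e.image f ∈ EG}

/-- The power-sum profile `Π_ℓ`. -/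
def powerSumProfile (ℓ : ℕ) : Set (Fin (ℓ - 1) → ℝ) :=
  closure {v | ∃ (n : ℕ) (x : Fin n → ℝ), (∀ i, 0 ≤ x i) ∧ (∑ i, x i) = 1 ∧
    ∀ j : Fin (ℓ - 1), v j = ∑ i, x i ^ ((j : ℕ) + 2)}

namespace HyperstarProfile

open Finset Filter Topology
open scoped Nat

section Counting

variable {V : Type*} [Fintype V] [DecidableEq V]

def degree (E : Finset (Finset V)) (v : V) : ℕ := #{e ∈ E | v ∈ e}

noncomputable def imageEqEquiv {α : Type*} [Fintype α] (s : Finset V)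
    (hs : #s = Fintype.card α) :
    {g : α → V // univ.image g = s} ≃ (α ≃ s) where
  toFun g := Equiv.ofBijective (fun a => ⟨g.1 a, by simp [← g.2]⟩) <| by
    have hinj : Set.InjOn g.1 (univ : Finset α) :=
      injOn_of_card_image_eq (by rw [g.2, hs, card_univ])
    rw [Fintype.bijective_iff_injective_and_card, Fintype.card_coe, hs]
    exact ⟨fun a b hab => hinj (mem_univ a) (mem_univ b) (congrArg Subtype.val hab), rfl⟩
  invFun f := ⟨fun a => f a, by
    ext x
    simp only [mem_image, mem_univ, true_and]
    exact ⟨fun ⟨a, ha⟩ => ha ▸ (f a).2, fun hx => ⟨f.symm ⟨x, hx⟩, by simp⟩⟩⟩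
  left_inv _ := rfl
  right_inv _ := Equiv.ext fun _ => rfl

variable {α : Type*} [Fintype α] [DecidableEq α]

theorem card_filter_insert_image_eq {e : Finset V} {v : V} (hv : v ∈ e)
    (he : #e = Fintype.card α + 1) :
    #{g : α → V | insert v (univ.image g) = e} = (Fintype.card α)! := by
  have hs : #(e.erase v) = Fintype.card α := by rw [card_erase_of_mem hv, he, Nat.add_sub_cancel]
  have key (g : α → V) : insert v (univ.image g) = e ↔ univ.image g = e.erase v := by
    refine ⟨fun h => ?_, fun h => by rw [h, insert_erase hv]⟩
    have hvg : v ∉ univ.image g := fun hvg => by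
      have := card_image_le (s := univ) (f := g)
      rw [← insert_eq_of_mem hvg, h, he, card_univ] at this
      omega
    rw [← h, erase_insert hvg]
  simp_rw [key]
  rw [← Fintype.card_subtype, Fintype.card_congr (imageEqEquiv _ hs),
    Fintype.card_equiv (Fintype.equivOfCardEq (by rw [Fintype.card_coe, hs]))]

theorem card_insert_image_mem {E : Finset (Finset V)} (hE : ∀ e ∈ E, #e = Fintype.card α + 1)
    (v : V) :
    Fintype.card {g : α → V // insert v (univ.image g) ∈ E} = (Fintype.card α)! * degree E v := by
  rw [Fintype.card_subtype, card_eq_sum_card_fiberwise (t := E)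
      (fun g hg => mem_coe.2 (mem_filter.1 hg).2),
    degree, card_eq_sum_ones, mul_sum, sum_filter]
  refine sum_congr rfl fun e he => ?_
  rw [filter_filter]
  split_ifs with hv
  · rw [mul_one, ← card_filter_insert_image_eq hv (hE e he)]
    congr 1
    exact filter_congr fun g _ => ⟨And.right, fun h => ⟨h ▸ he, h⟩⟩
  · rw [card_eq_zero, filter_eq_empty_iff]
    rintro g - ⟨-, rfl⟩
    exact hv (mem_insert_self v _)

def hyperstarHomEquiv (k b : ℕ) (E : Finset (Finset V)) :
    {f : Option (Fin b × Fin (k - 1)) → V // ∀ e ∈ hyperstarEdges k b, e.image f ∈ E} ≃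
      Σ v : V, (Fin b → {g : Fin (k - 1) → V // insert v (univ.image g) ∈ E}) where
  toFun f := ⟨f.1 none, fun t => ⟨fun s => f.1 (some (t, s)), by
    have h := f.2 _ (mem_image_of_mem _ (mem_univ t))
    rwa [image_insert, image_image] at h⟩⟩
  invFun p := ⟨fun o => o.elim p.1 fun q => (p.2 q.1).1 q.2, by
    rintro _ he
    obtain ⟨t, -, rfl⟩ := mem_image.1 he
    rw [image_insert, image_image]
    exact (p.2 t).2⟩
  left_inv f := Subtype.ext <| funext fun o => by cases o <;> rfl
  right_inv _ := rfl

theorem hypHomCount_hyperstarEdges {k : ℕ} (hk : 0 < k) (b : ℕ)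
    {E : Finset (Finset V)} (hE : ∀ e ∈ E, #e = k) :
    hypHomCount (hyperstarEdges k b) E = (k - 1)! ^ b * ∑ v, degree E v ^ b := by
  have hE' : ∀ e ∈ E, #e = Fintype.card (Fin (k - 1)) + 1 := by
    simpa [Nat.sub_add_cancel hk] using hE
  rw [hypHomCount, Nat.card_congr (hyperstarHomEquiv k b E), Nat.card_eq_fintype_card,
    Fintype.card_sigma]
  simp_rw [Fintype.card_fun, card_insert_image_mem hE', Fintype.card_fin, mul_pow, ← mul_sum]

theorem hyperstar_ratio_eq {k : ℕ} (hk : 0 < k) (m : ℕ) {E : Finset (Finset V)}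
    (hE : ∀ e ∈ E, #e = k) :
    (hypHomCount (hyperstarEdges k (m * k)) E : ℝ) / (hypHomCount (hyperstarEdges k k) E) ^ m =
      (∑ v, ((degree E v : ℝ) ^ k) ^ m) / (∑ v, (degree E v : ℝ) ^ k) ^ m := by
  simp only [hypHomCount_hyperstarEdges hk _ hE, Nat.cast_mul, Nat.cast_pow, Nat.cast_sum,
    mul_pow, ← pow_mul, mul_comm k m]
  exact mul_div_mul_left _ _ (by positivity)

end Counting

section Profiles

def powerSumPoints (ℓ : ℕ) : Set (Fin (ℓ - 1) → ℝ) :=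
  {v | ∃ (n : ℕ) (x : Fin n → ℝ), (∀ i, 0 ≤ x i) ∧ (∑ i, x i) = 1 ∧
    ∀ j : Fin (ℓ - 1), v j = ∑ i, x i ^ ((j : ℕ) + 2)}

def hyperstarRatioPoints (k ℓ : ℕ) : Set (Fin (ℓ - 1) → ℝ) :=
  {v | ∃ (V : Type) (_ : Fintype V) (_ : DecidableEq V) (E : Finset (Finset V)),
    (∀ e ∈ E, e.card = k) ∧ hypHomCount (hyperstarEdges k k) E ≠ 0 ∧
    ∀ j : Fin (ℓ - 1), v j =
      (hypHomCount (hyperstarEdges k (((j : ℕ) + 2) * k)) E : ℝ) /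
        (hypHomCount (hyperstarEdges k k) E : ℝ) ^ ((j : ℕ) + 2)}

theorem sum_pow_div_mem_powerSumPoints {ι : Type*} [Fintype ι] (ℓ : ℕ) {w : ι → ℝ}
    (hw : ∀ i, 0 ≤ w i) (hsum : ∑ i, w i ≠ 0) :
    (fun j : Fin (ℓ - 1) => (∑ i, w i ^ ((j : ℕ) + 2)) / (∑ i, w i) ^ ((j : ℕ) + 2)) ∈
      powerSumPoints ℓ := by
  let σ := (Fintype.equivFin ι).symm
  refine ⟨Fintype.card ι, fun i => w (σ i) / ∑ i, w i, fun i => ?_, ?_, fun j => ?_⟩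
  · exact div_nonneg (hw _) (sum_nonneg fun i _ => hw i)
  · rw [← sum_div, σ.sum_comp w, div_self hsum]
  · simp_rw [div_pow, ← sum_div, σ.sum_comp fun i => w i ^ ((j : ℕ) + 2)]

theorem hyperstarRatioPoints_subset_powerSumPoints {k : ℕ} (hk : 0 < k) (ℓ : ℕ) :
    hyperstarRatioPoints k ℓ ⊆ powerSumPoints ℓ := by
  rintro v ⟨V, _, _, E, hE, hne, hv⟩
  have hsum : ∑ x, (degree E x : ℝ) ^ k ≠ 0 := by
    rw [hypHomCount_hyperstarEdges hk k hE] at hne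
    exact_mod_cast right_ne_zero_of_mul hne
  convert sum_pow_div_mem_powerSumPoints ℓ (fun x => by positivity) hsum with j
  rw [hv j, hyperstar_ratio_eq hk _ hE]

end Profiles

section Flower

variable (k : ℕ) {ι : Type*} [DecidableEq ι] (a : ι → ℕ)

/-- The flower has centers `i : ι`, and `a i` petals at `i`, each a hyperedge made of its center
and `k - 1` leaves of its own. -/
abbrev FlowerVertex := ι ⊕ (Σ i, Fin (a i)) × Fin (k - 1)

def flowerPetal (p : Σ i, Fin (a i)) : Finset (FlowerVertex k a) :=
  insert (.inl p.1) (univ.image fun s => .inr (p, s))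

variable {k a}

@[simp]
theorem inl_mem_flowerPetal {i : ι} {p : Σ i, Fin (a i)} :
    .inl i ∈ flowerPetal k a p ↔ p.1 = i := by
  simp [flowerPetal, eq_comm]

@[simp]
theorem inr_mem_flowerPetal {q p : Σ i, Fin (a i)} {s : Fin (k - 1)} :
    .inr (q, s) ∈ flowerPetal k a p ↔ q = p := by
  simp [flowerPetal, eq_comm]

theorem card_flowerPetal (hk : 0 < k) (p : Σ i, Fin (a i)) : #(flowerPetal k a p) = k := by
  rw [flowerPetal, card_insert_of_notMem (by simp),
    card_image_of_injective _ fun s t h => by simpa using h, card_univ, Fintype.card_fin]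
  omega

theorem flowerPetal_injective (hk : 2 ≤ k) : Function.Injective (flowerPetal k a) := by
  intro p q h
  have hleaf : (.inr (p, ⟨0, by omega⟩) : FlowerVertex k a) ∈ flowerPetal k a q := by
    rw [← h, inr_mem_flowerPetal]
  exact inr_mem_flowerPetal.1 hleaf

variable [Fintype ι]

variable (k a) in
def flowerEdges : Finset (Finset (FlowerVertex k a)) := univ.image (flowerPetal k a)

theorem card_of_mem_flowerEdges (hk : 0 < k) : ∀ e ∈ flowerEdges k a, #e = k := by
  simp only [flowerEdges, mem_image, mem_univ, true_and, forall_exists_index,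
    forall_apply_eq_imp_iff]
  exact card_flowerPetal hk

theorem degree_flowerEdges (hk : 2 ≤ k) (v : FlowerVertex k a) :
    degree (flowerEdges k a) v = #{p | v ∈ flowerPetal k a p} := by
  rw [degree, flowerEdges, filter_image, card_image_of_injective _ (flowerPetal_injective hk)]

theorem degree_flowerEdges_inl (hk : 2 ≤ k) (i : ι) :
    degree (flowerEdges k a) (.inl i) = a i := by
  rw [degree_flowerEdges hk]
  simp only [inl_mem_flowerPetal]
  rw [← Fintype.card_subtype, Fintype.card_congr (Equiv.sigmaSubtype i), Fintype.card_fin]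

theorem degree_flowerEdges_inr (hk : 2 ≤ k) (q : Σ i, Fin (a i)) (s : Fin (k - 1)) :
    degree (flowerEdges k a) (.inr (q, s)) = 1 := by
  rw [degree_flowerEdges hk]
  exact card_eq_one.2 ⟨q, by ext; simp [eq_comm]⟩

theorem sum_degree_flowerEdges_pow (hk : 2 ≤ k) (b : ℕ) :
    ∑ v, degree (flowerEdges k a) v ^ b = ∑ i, a i ^ b + (∑ i, a i) * (k - 1) := by
  simp [Fintype.sum_sum_type, degree_flowerEdges_inl hk, degree_flowerEdges_inr hk,
    Fintype.card_sigma]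

end Flower

section Approximation

theorem tendsto_sum_degree_flowerEdges_pow_div {k : ℕ} (hk : 2 ≤ k) {ι : Type*} [Fintype ι]
    [DecidableEq ι] {a : ℕ → ι → ℕ} {y : ι → ℝ}
    (ha : ∀ i, Tendsto (fun N : ℕ => (a N i : ℝ) / N) atTop (𝓝 (y i))) {b : ℕ} (hb : 2 ≤ b) :
    Tendsto (fun N : ℕ => (∑ v, (degree (flowerEdges k (a N)) v : ℝ) ^ b) / (N : ℝ) ^ b)
      atTop (𝓝 (∑ i, y i ^ b)) := by
  have hcenters : Tendsto (fun N : ℕ => ∑ i, ((a N i : ℝ) / N) ^ b) atTop (𝓝 (∑ i, y i ^ b)) :=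
    tendsto_finsetSum _ fun i _ => (ha i).pow b
  have hleaves : Tendsto
      (fun N : ℕ => (∑ i, (a N i : ℝ) / N) * (k - 1 : ℕ) * ((N : ℝ) ^ (b - 1))⁻¹) atTop (𝓝 0) := by
    have hinv : Tendsto (fun N : ℕ => ((N : ℝ) ^ (b - 1))⁻¹) atTop (𝓝 0) :=
      ((tendsto_pow_atTop (by omega)).comp tendsto_natCast_atTop_atTop).inv_tendsto_atTop
    simpa using ((tendsto_finsetSum _ fun i _ => ha i).mul_const _).mul hinv
  rw [← add_zero (∑ i, y i ^ b)]
  refine (hcenters.add hleaves).congr' ?_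
  filter_upwards [eventually_ne_atTop 0] with N hN
  have hsum : ∑ v, (degree (flowerEdges k (a N)) v : ℝ) ^ b =
      ∑ i, (a N i : ℝ) ^ b + (∑ i, (a N i : ℝ)) * (k - 1 : ℕ) := by
    exact_mod_cast sum_degree_flowerEdges_pow hk b
  have hpow : (N : ℝ) ^ b = (N : ℝ) ^ (b - 1) * N := by
    rw [← pow_succ, Nat.sub_add_cancel (by omega)]
  simp only [hsum, div_pow, ← sum_div]
  field_simp
  rw [hpow]
  ring

theorem powerSumPoints_subset_closure_hyperstarRatioPoints {k : ℕ} (hk : 2 ≤ k) (ℓ : ℕ) :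
    powerSumPoints ℓ ⊆ closure (hyperstarRatioPoints k ℓ) := by
  rintro v ⟨n, x, hx0, hx1, hv⟩
  set y : Fin n → ℝ := fun i => x i ^ (k : ℝ)⁻¹
  have hyk (i : Fin n) : y i ^ k = x i := Real.rpow_inv_natCast_pow (hx0 i) (by omega)
  set a : ℕ → Fin n → ℕ := fun N i => ⌈y i * N⌉₊
  have ha (i : Fin n) : Tendsto (fun N : ℕ => (a N i : ℝ) / N) atTop (𝓝 (y i)) :=
    (tendsto_nat_ceil_mul_div_atTop (Real.rpow_nonneg (hx0 i) _)).comp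
      tendsto_natCast_atTop_atTop
  set D : ℕ → ℕ → ℝ := fun b N => (∑ v, (degree (flowerEdges k (a N)) v : ℝ) ^ b) / (N : ℝ) ^ b
  have hD {b : ℕ} (hb : 2 ≤ b) : Tendsto (D b) atTop (𝓝 (∑ i, y i ^ b)) :=
    tendsto_sum_degree_flowerEdges_pow_div hk ha hb
  have hDk : Tendsto (D k) atTop (𝓝 1) := by simpa only [hyk, hx1] using hD hk
  set w : ℕ → Fin (ℓ - 1) → ℝ := fun N j => D (((j : ℕ) + 2) * k) N / D k N ^ ((j : ℕ) + 2)
  have hw_lim : Tendsto w atTop (𝓝 v) := by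
    refine tendsto_pi_nhds.2 fun j => ?_
    have hb : 2 ≤ ((j : ℕ) + 2) * k := le_mul_of_one_le_of_le (by omega) hk
    have hlim := (hD hb).div (hDk.pow ((j : ℕ) + 2)) (by norm_num)
    simp only [pow_mul', hyk, one_pow, div_one, ← hv j] at hlim
    exact hlim
  have hw_mem : ∀ᶠ N in atTop, w N ∈ hyperstarRatioPoints k ℓ := by
    filter_upwards [eventually_ne_atTop 0, hDk.eventually_ne one_ne_zero] with N hN hDN
    have hE := card_of_mem_flowerEdges (a := a N) (by omega : 0 < k)
    refine ⟨FlowerVertex k (a N), inferInstance, inferInstance, flowerEdges k (a N), hE, ?_,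
      fun j => ?_⟩
    · have hsum : ∑ v, (degree (flowerEdges k (a N)) v : ℝ) ^ k ≠ 0 := fun h =>
        hDN (by simp only [D, h, zero_div])
      rw [hypHomCount_hyperstarEdges (by omega) k hE]
      exact mul_ne_zero (by positivity) (by exact_mod_cast hsum)
    · rw [hyperstar_ratio_eq (by omega) _ hE]
      simp only [w, D, div_pow, ← pow_mul, mul_comm k]
      exact div_div_div_cancel_right₀ (by positivity) _ _
  exact mem_closure_of_tendsto hw_lim hw_mem

end Approximation

end HyperstarProfile

theorem hyperstar_ratio_profile_eq_powerSumProfile_general (k ℓ : ℕ) (hk : 2 ≤ k) :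
    closure {v : Fin (ℓ - 1) → ℝ |
      ∃ (V : Type) (_ : Fintype V) (_ : DecidableEq V) (E : Finset (Finset V)),
        (∀ e ∈ E, e.card = k) ∧ hypHomCount (hyperstarEdges k k) E ≠ 0 ∧
        ∀ j : Fin (ℓ - 1), v j =
          (hypHomCount (hyperstarEdges k (((j : ℕ) + 2) * k)) E : ℝ) /
            (hypHomCount (hyperstarEdges k k) E : ℝ) ^ ((j : ℕ) + 2)} =
      powerSumProfile ℓ := by
  change closure (HyperstarProfile.hyperstarRatioPoints k ℓ) =
    closure (HyperstarProfile.powerSumPoints ℓ)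
  refine subset_antisymm ?_ ?_
  · exact closure_mono (HyperstarProfile.hyperstarRatioPoints_subset_powerSumPoints (by omega) ℓ)
  · exact closure_minimal
      (HyperstarProfile.powerSumPoints_subset_closure_hyperstarRatioPoints hk ℓ) isClosed_closure

/-- The hyperstar ratio profile equals the power-sum profile: the closure of the points
`(hom(S^(k)_{2k};G)/hom(S^(k)_k;G)^2, …, hom(S^(k)_{ℓk};G)/hom(S^(k)_k;G)^ℓ)` over all
`k`-uniform hypergraphs `G` with `hom(S^(k)_k;G) ≠ 0` equals `Π_ℓ`. -/
theorem hyperstar_ratio_profile_eq_powerSumProfile (k ℓ : ℕ) (hk : 2 ≤ k) (hℓ : 2 ≤ ℓ) :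
    closure {v : Fin (ℓ - 1) → ℝ |
      ∃ (V : Type) (_ : Fintype V) (_ : DecidableEq V) (E : Finset (Finset V)),
        (∀ e ∈ E, e.card = k) ∧ hypHomCount (hyperstarEdges k k) E ≠ 0 ∧
        ∀ j : Fin (ℓ - 1), v j =
          (hypHomCount (hyperstarEdges k (((j : ℕ) + 2) * k)) E : ℝ) /
            (hypHomCount (hyperstarEdges k k) E : ℝ) ^ ((j : ℕ) + 2)} =
      powerSumProfile ℓ :=
  hyperstar_ratio_profile_eq_powerSumProfile_general k ℓ hk
end

section
/- Let y_1,...,y_n be nonnegative reals summing to 1 and let k ≥ 2. For each N, let G_N be the disjoint union over i of hyperstars S^(k)_{b_i(N)} where b_i(N) = ⌊y_i^{1/k} N/(k-1)!⌋. Then for each j ≥ 2, hom(S^(k)_{kj};G_N)/hom(S^(k)_k;G_N)^j → Σ_i y_i^j as N → ∞. -/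
/-- The edge set of the disjoint union of hyperstars `S^(k)_{b i}`, `i = 1, …, n`. -/
def hyperstarUnionEdges (k : ℕ) {n : ℕ} (b : Fin n → ℕ) :
    Finset (Finset (Σ i : Fin n, Option (Fin (b i) × Fin (k - 1)))) :=
  Finset.univ.biUnion fun i =>
    (hyperstarEdges k (b i)).image (Finset.image (fun v => ⟨i, v⟩))

open Finset

section Counting

variable {V : Type*} [DecidableEq V]

noncomputable def imageEqEquiv {d : ℕ} {S : Finset V} (hS : #S = d) :
    {h : Fin d → V // univ.image h = S} ≃ (Fin d ≃ S) where
  toFun h := Equiv.ofBijective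
    (fun x => ⟨h.1 x, h.2.le (mem_image_of_mem _ (mem_univ x))⟩) <| by
    refine (Fintype.bijective_iff_surjective_and_card _).2 ⟨?_, by simp [hS]⟩
    rintro ⟨v, hv⟩
    obtain ⟨x, -, hx⟩ := mem_image.1 (h.2.symm ▸ hv)
    exact ⟨x, Subtype.ext hx⟩
  invFun e := ⟨fun x => e x, by
    ext v
    simp only [mem_image, mem_univ, true_and]
    exact ⟨fun ⟨x, hx⟩ => hx ▸ (e x).2, fun hv => ⟨e.symm ⟨v, hv⟩, by simp⟩⟩⟩
  left_inv h := rfl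
  right_inv e := by ext; rfl

theorem image_mem_hyperstarEdges_iff {k m : ℕ} {EG : Finset (Finset V)}
    (f : Option (Fin m × Fin (k - 1)) → V) :
    (∀ e ∈ hyperstarEdges k m, e.image f ∈ EG) ↔
      ∀ t, insert (f none) (univ.image fun s => f (some (t, s))) ∈ EG := by
  simp [hyperstarEdges, image_insert, image_image, Function.comp_def]

def hyperstarHomEquiv (k m : ℕ) (EG : Finset (Finset V)) :
    {f : Option (Fin m × Fin (k - 1)) → V // ∀ e ∈ hyperstarEdges k m, e.image f ∈ EG} ≃
      Σ c : V, Fin m → {h : Fin (k - 1) → V // insert c (univ.image h) ∈ EG} where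
  toFun f := ⟨f.1 none, fun t => ⟨fun s => f.1 (some (t, s)),
    (image_mem_hyperstarEdges_iff f.1).1 f.2 t⟩⟩
  invFun x := ⟨fun o => o.elim x.1 fun p => (x.2 p.1).1 p.2,
    (image_mem_hyperstarEdges_iff _).2 fun t => (x.2 t).2⟩
  left_inv f := by
    ext (_ | ⟨t, s⟩) <;> rfl
  right_inv x := rfl

variable [Fintype V]

theorem card_image_univ_eq_factorial {d : ℕ} {S : Finset V} (hS : #S = d) :
    Fintype.card {h : Fin d → V // univ.image h = S} = d.factorial := by
  rw [Fintype.card_congr (imageEqEquiv hS),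
    Fintype.card_equiv (Fintype.equivOfCardEq (by simp [hS])), Fintype.card_fin]

theorem card_insert_image_eq_factorial {k : ℕ} (hk : 1 ≤ k) {e : Finset V} (he : #e = k) {v : V}
    (hv : v ∈ e) :
    Fintype.card {h : Fin (k - 1) → V // insert v (univ.image h) = e} = (k - 1).factorial := by
  have key (h : Fin (k - 1) → V) : insert v (univ.image h) = e ↔ univ.image h = e.erase v := by
    refine ⟨fun hins => ?_, fun him => by rw [him, insert_erase hv]⟩
    have hvh : v ∉ univ.image h := fun hvh => by
      have := card_image_le (s := univ) (f := h)
      rw [← insert_eq_of_mem hvh, hins, he, card_univ, Fintype.card_fin] at this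
      omega
    rw [← hins, erase_insert hvh]
  rw [Fintype.card_congr (Equiv.subtypeEquivRight key),
    card_image_univ_eq_factorial (by rw [card_erase_of_mem hv, he])]

noncomputable def branchCount (k : ℕ) (EG : Finset (Finset V)) (v : V) : ℕ :=
  Fintype.card {h : Fin (k - 1) → V // insert v (univ.image h) ∈ EG}

theorem hypHomCount_hyperstarEdges (k m : ℕ) (EG : Finset (Finset V)) :
    hypHomCount (hyperstarEdges k m) EG = ∑ v, branchCount k EG v ^ m := by
  rw [hypHomCount, Nat.card_congr (hyperstarHomEquiv k m EG), Nat.card_eq_fintype_card,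
    Fintype.card_sigma]
  simp [branchCount]

theorem branchCount_eq_factorial_mul_degree {k : ℕ} (hk : 1 ≤ k) {EG : Finset (Finset V)}
    (hEG : ∀ e ∈ EG, #e = k) (v : V) :
    branchCount k EG v = (k - 1).factorial * #{e ∈ EG | v ∈ e} := by
  rw [branchCount, Fintype.card_subtype,
    card_eq_sum_card_fiberwise (f := fun h => insert v (univ.image h)) (t := {e ∈ EG | v ∈ e})
      (fun h hh => mem_filter.2 ⟨(mem_filter.1 hh).2, mem_insert_self _ _⟩),
    sum_const_nat fun e he => ?_, mul_comm]
  obtain ⟨heG, hve⟩ := mem_filter.1 he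
  rw [← card_insert_image_eq_factorial hk (hEG e heG) hve, Fintype.card_subtype, filter_filter]
  exact congrArg card <|
    filter_congr fun h _ => ⟨And.right, fun hh => ⟨by simpa [hh] using heG, hh⟩⟩

end Counting

section HyperstarUnion

variable {k n : ℕ} {b : Fin n → ℕ}

def hyperstarUnionEdge (k : ℕ) (b : Fin n → ℕ) (p : Σ i, Fin (b i)) :
    Finset (Σ i : Fin n, Option (Fin (b i) × Fin (k - 1))) :=
  insert ⟨p.1, none⟩ (univ.image fun s => ⟨p.1, some (p.2, s)⟩)

theorem hyperstarUnionEdges_eq_image (k : ℕ) (b : Fin n → ℕ) :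
    hyperstarUnionEdges k b = univ.image (hyperstarUnionEdge k b) := by
  ext e
  simp [hyperstarUnionEdges, hyperstarEdges, hyperstarUnionEdge, image_insert, image_image,
    Function.comp_def, eq_comm]

theorem center_mem_hyperstarUnionEdge_iff {i : Fin n} {p : Σ i, Fin (b i)} :
    ⟨i, none⟩ ∈ hyperstarUnionEdge k b p ↔ p.1 = i := by
  obtain ⟨i', t⟩ := p
  rcases eq_or_ne i' i with rfl | h
  · simp [hyperstarUnionEdge]
  · simp [hyperstarUnionEdge, h, h.symm]

theorem leaf_mem_hyperstarUnionEdge_iff {i : Fin n} {t : Fin (b i)} {s : Fin (k - 1)}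
    {p : Σ i, Fin (b i)} :
    ⟨i, some (t, s)⟩ ∈ hyperstarUnionEdge k b p ↔ p = ⟨i, t⟩ := by
  obtain ⟨i', t'⟩ := p
  rcases eq_or_ne i' i with rfl | h
  · simp [hyperstarUnionEdge, eq_comm]
  · simp [hyperstarUnionEdge, h, h.symm]

theorem hyperstarUnionEdge_injective (hk : 2 ≤ k) :
    Function.Injective (hyperstarUnionEdge k b) := by
  intro p q hpq
  have hleaf : ⟨p.1, some (p.2, ⟨0, by omega⟩)⟩ ∈ hyperstarUnionEdge k b q :=
    hpq ▸ leaf_mem_hyperstarUnionEdge_iff.2 rfl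
  exact (leaf_mem_hyperstarUnionEdge_iff.1 hleaf).symm

theorem card_hyperstarUnionEdge (hk : 1 ≤ k) (p : Σ i, Fin (b i)) :
    #(hyperstarUnionEdge k b p) = k := by
  rw [hyperstarUnionEdge, card_insert_of_notMem (by simp),
    card_image_of_injective _ fun s s' h => by simpa using h]
  simp only [card_univ, Fintype.card_fin]
  omega

theorem hyperstarUnionEdges_degree_eq_card (hk : 2 ≤ k)
    (v : Σ i : Fin n, Option (Fin (b i) × Fin (k - 1))) :
    #{e ∈ hyperstarUnionEdges k b | v ∈ e} = #{p | v ∈ hyperstarUnionEdge k b p} := by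
  rw [hyperstarUnionEdges_eq_image, filter_image,
    card_image_of_injective _ (hyperstarUnionEdge_injective hk)]

theorem hyperstarUnionEdges_degree_center (hk : 2 ≤ k) (i : Fin n) :
    #{e ∈ hyperstarUnionEdges k b | ⟨i, none⟩ ∈ e} = b i := by
  rw [hyperstarUnionEdges_degree_eq_card hk, card_filter, Fintype.sum_sigma]
  simp [center_mem_hyperstarUnionEdge_iff]

theorem hyperstarUnionEdges_degree_leaf (hk : 2 ≤ k) (i : Fin n) (t : Fin (b i))
    (s : Fin (k - 1)) :
    #{e ∈ hyperstarUnionEdges k b | ⟨i, some (t, s)⟩ ∈ e} = 1 := by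
  simp [hyperstarUnionEdges_degree_eq_card hk, leaf_mem_hyperstarUnionEdge_iff, filter_eq']

theorem card_of_mem_hyperstarUnionEdges (hk : 1 ≤ k) :
    ∀ e ∈ hyperstarUnionEdges k b, #e = k := by
  simp only [hyperstarUnionEdges_eq_image, forall_mem_image]
  exact fun p _ => card_hyperstarUnionEdge hk p

theorem hypHomCount_hyperstarUnionEdges (hk : 2 ≤ k) (m : ℕ) :
    hypHomCount (hyperstarEdges k m) (hyperstarUnionEdges k b) =
      ∑ i, (((k - 1).factorial * b i) ^ m + b i * (k - 1) * (k - 1).factorial ^ m) := by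
  have hk1 : 1 ≤ k := by omega
  rw [hypHomCount_hyperstarEdges, Fintype.sum_sigma]
  refine sum_congr rfl fun i _ => ?_
  simp only [Fintype.sum_option, Fintype.sum_prod_type,
    branchCount_eq_factorial_mul_degree hk1 (card_of_mem_hyperstarUnionEdges hk1),
    hyperstarUnionEdges_degree_center hk, hyperstarUnionEdges_degree_leaf hk]
  simp only [mul_one, sum_const, card_univ, Fintype.card_fin, smul_eq_mul]
  ring

end HyperstarUnion

open Filter Topology

theorem tendsto_natFloor_mul_div_div {a d : ℝ} (ha : 0 ≤ a) (hd : 0 ≤ d) :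
    Tendsto (fun N : ℕ => (⌊a * N / d⌋₊ : ℝ) / N) atTop (𝓝 (a / d)) := by
  simpa only [div_mul_eq_mul_div, Function.comp_def] using
    (tendsto_nat_floor_mul_div_atTop (div_nonneg ha hd)).comp tendsto_natCast_atTop_atTop

theorem tendsto_mul_pow_add_mul_div_pow {b : ℕ → ℝ} {a c β : ℝ} {m : ℕ} (hm : 2 ≤ m)
    (hb : Tendsto (fun N => b N / N) atTop (𝓝 β)) :
    Tendsto (fun N : ℕ => ((a * b N) ^ m + b N * c) / (N : ℝ) ^ m) atTop
      (𝓝 ((a * β) ^ m)) := by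
  have hsmall : Tendsto (fun N : ℕ => c / (N : ℝ) ^ (m - 1)) atTop (𝓝 0) :=
    tendsto_const_nhds.div_atTop <|
      (tendsto_pow_atTop (by omega)).comp tendsto_natCast_atTop_atTop
  have hlim := ((hb.const_mul a).pow m).add (hb.mul hsmall)
  rw [mul_zero, add_zero] at hlim
  refine hlim.congr fun N => ?_
  have hpow : (N : ℝ) * N ^ (m - 1) = N ^ m := by
    rw [← pow_succ', Nat.sub_add_cancel (by omega)]
  rw [mul_div_assoc', div_pow, div_mul_div_comm, hpow, add_div, mul_pow]

theorem tendsto_hypHomCount_hyperstarUnion_div_pow {n k m : ℕ} {a : Fin n → ℝ}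
    (ha : ∀ i, 0 ≤ a i) (hk : 2 ≤ k) (hm : 2 ≤ m) :
    Tendsto (fun N : ℕ =>
      (hypHomCount (hyperstarEdges k m)
        (hyperstarUnionEdges k fun i => ⌊a i * N / (k - 1).factorial⌋₊) : ℝ) /
        (N : ℝ) ^ m)
      atTop (𝓝 (∑ i, a i ^ m)) := by
  simp only [hypHomCount_hyperstarUnionEdges hk, Nat.cast_sum, sum_div]
  refine tendsto_finsetSum _ fun i _ => ?_
  have hfact : ((k - 1).factorial : ℝ) ≠ 0 := by positivity
  have := tendsto_mul_pow_add_mul_div_pow (a := ((k - 1).factorial : ℝ))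
    (c := ((k - 1 : ℕ) : ℝ) * (k - 1).factorial ^ m) hm
    (tendsto_natFloor_mul_div_div (ha i) (Nat.cast_nonneg (k - 1).factorial))
  rw [mul_div_cancel₀ _ hfact] at this
  convert this using 3
  push_cast
  ring

/-- For nonnegative reals `y_1,…,y_n` summing to `1` and `k ≥ 2`, letting `G_N` be the
disjoint union of the hyperstars `S^(k)_{b_i(N)}` with `b_i(N) = ⌊y_i^{1/k} N/(k-1)!⌋`,
the ratio `hom(S^(k)_{kj};G_N)/hom(S^(k)_k;G_N)^j` converges to `Σ_i y_i^j` for each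
`j ≥ 2`. -/
theorem hyperstar_ratio_tendsto_powerSum {n : ℕ} (y : Fin n → ℝ)
    (hy : ∀ i, 0 ≤ y i) (hsum : ∑ i, y i = 1) (k j : ℕ) (hk : 2 ≤ k) (hj : 2 ≤ j) :
    Filter.Tendsto
      (fun N : ℕ =>
        (hypHomCount (hyperstarEdges k (k * j))
            (hyperstarUnionEdges k
              (fun i => ⌊(y i) ^ ((1 : ℝ) / k) * N / (k - 1).factorial⌋₊)) : ℝ) /
          (hypHomCount (hyperstarEdges k k)
            (hyperstarUnionEdges k
              (fun i => ⌊(y i) ^ ((1 : ℝ) / k) * N / (k - 1).factorial⌋₊)) : ℝ) ^ j)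
      Filter.atTop (nhds (∑ i, y i ^ j)) := by
  have hroot (i : Fin n) : (y i ^ ((1 : ℝ) / k)) ^ k = y i := by
    rw [one_div, Real.rpow_inv_natCast_pow (hy i) (by omega)]
  have hroot_nonneg (i : Fin n) : 0 ≤ y i ^ ((1 : ℝ) / k) := Real.rpow_nonneg (hy i) _
  have hnum := tendsto_hypHomCount_hyperstarUnion_div_pow (m := k * j) hroot_nonneg hk
    (by nlinarith)
  have hden := (tendsto_hypHomCount_hyperstarUnion_div_pow hroot_nonneg hk hk).pow j
  simp only [pow_mul, hroot] at hnum
  simp only [hroot, hsum, one_pow] at hden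
  refine (div_one (∑ i, y i ^ j) ▸ hnum.div hden one_ne_zero).congr' ?_
  filter_upwards [eventually_gt_atTop 0] with N hN
  rw [Pi.div_apply, div_pow, div_div_div_cancel_right₀ (by positivity)]
end

section
/- The necklace ratio profile for fixed q equals the power-sum profile: for every q ≥ 2 and ℓ ≥ 2, the closure of { (hom(N_{8,q};G)/hom(N_{4,q};G)^2, ..., hom(N_{4ℓ,q};G)/hom(N_{4,q};G)^ℓ) : G a graph with hom(N_{4,q};G) ≠ 0 } equals Π_ℓ. -/
open SimpleGraph

/-- The necklace `N_{c,q}`: the `q`-ification of the cycle of length `c`. -/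
def necklace (c q : ℕ) : SimpleGraph (ZMod c ⊕ ZMod c × Fin (q - 2)) where
  Adj x y :=
    match x, y with
    | .inl a, .inl b => a ≠ b ∧ (a - b = 1 ∨ b - a = 1)
    | .inl a, .inr (t, _) => a = t ∨ a = t + 1
    | .inr (t, _), .inl a => a = t ∨ a = t + 1
    | .inr (t, s), .inr (t', s') => t = t' ∧ s ≠ s'
  symm := ⟨by rintro (a | ⟨t, s⟩) (b | ⟨t', s'⟩) h <;> simp_all <;> tauto⟩
  loopless := ⟨by rintro (a | ⟨t, s⟩) h <;> simp_all⟩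

/-!
A homomorphism `N_{c,q} → G` is a closed walk `f` of length `c` in `G` together with, for every
step `f t f (t+1)`, an ordered tuple of `q - 2` vertices completing that edge to a `q`-clique. Hence
`hom(N_{c,q}; G) = tr M^c = ∑ λᵢ^c` for the symmetric clique-counting matrix `M = M_{G,q}`, and
`xᵢ = λᵢ⁴ / ∑ λ⁴` exhibits every necklace ratio vector as a point of `Π_ℓ`.

Conversely, for a disjoint union of cliques `K_{mᵢ}` the matrix `M` is block diagonal with blocks
`(mᵢ - 2)_{q-2} (J - I)`, so `hom(N_{c,q}; ⊔ K_{mᵢ}) ~ ∑ (mᵢ^{q-1})^c`. Taking `mᵢ ≈ zᵢ t` with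
`zᵢ^{4(q-1)} = xᵢ` and letting `t → ∞`, the ratio vectors converge to `(p₂(x), …, p_ℓ(x))`.
-/

open Matrix Filter Topology Unitary

section ClosedWalks

variable {V R : Type*} [Fintype V] [DecidableEq V] [CommSemiring R]

theorem Matrix.pow_succ_apply_eq_sum_prod_s19 (A : Matrix V V R) (k : ℕ) (u v : V) :
    (A ^ (k + 1)) u v =
      ∑ p : Fin k → V, ∏ i : Fin (k + 1),
        A ((Fin.cons u p : Fin (k + 1) → V) i) ((Fin.snoc p v : Fin (k + 1) → V) i) := by
  induction k generalizing v with
  | zero => simp [Fin.snoc]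
  | succ k ih =>
    rw [pow_succ, mul_apply, ← (Fin.snocEquiv fun _ => V).sum_comp, Fintype.sum_prod_type]
    refine Finset.sum_congr rfl fun w _ => ?_
    simp only [ih, Finset.sum_mul, Fin.snocEquiv, Equiv.coe_fn_mk, Fin.prod_univ_castSucc,
      Fin.cons_snoc_eq_snoc_cons, Fin.snoc_castSucc, Fin.snoc_last]

theorem Matrix.trace_pow_eq_sum_prod (A : Matrix V V R) (c : ℕ) [NeZero c] :
    trace (A ^ c) = ∑ h : ZMod c → V, ∏ t, A (h t) (h (t + 1)) := by
  obtain ⟨k, rfl⟩ := Nat.exists_eq_succ_of_ne_zero (NeZero.ne c)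
  have cons_add_one (u : V) (p : Fin k → V) (i : Fin (k + 1)) :
      (Fin.cons u p : Fin (k + 1) → V) (i + 1) = (Fin.snoc p u : Fin (k + 1) → V) i := by
    induction i using Fin.lastCases with
    | last => simp
    | cast i => rw [Fin.coeSucc_eq_succ, Fin.cons_succ, Fin.snoc_castSucc]
  -- `ZMod (k + 1)` is `Fin (k + 1)` by definition
  change _ = ∑ h : Fin (k + 1) → V, ∏ i, A (h i) (h (i + 1))
  rw [← (Fin.consEquiv fun _ => V).sum_comp, Fintype.sum_prod_type]
  simp only [trace, diag, pow_succ_apply_eq_sum_prod_s19, Fin.consEquiv, Equiv.coe_fn_mk, cons_add_one]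

end ClosedWalks

theorem Matrix.IsHermitian.trace_pow_eq_sum_eigenvalues_pow {n 𝕜 : Type*} [Fintype n]
    [DecidableEq n] [RCLike 𝕜] {A : Matrix n n 𝕜} (hA : A.IsHermitian) (k : ℕ) :
    (A ^ k).trace = ∑ i, (hA.eigenvalues i : 𝕜) ^ k := by
  conv_lhs => rw [hA.spectral_theorem, ← map_pow, conjStarAlgAut_apply, trace_mul_cycle,
    Unitary.coe_star_mul_self, one_mul, diagonal_pow, trace_diagonal]
  simp

section CliqueMatrix

variable {V : Type*}

def IsCliqueExtension (G : SimpleGraph V) (u v : V) {k : ℕ} (g : Fin k → V) : Prop :=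
  G.Adj u v ∧ (∀ s, G.Adj u (g s)) ∧ (∀ s, G.Adj v (g s)) ∧
    Pairwise fun s s' => G.Adj (g s) (g s')

theorem isCliqueExtension_comm {G : SimpleGraph V} {u v : V} {k : ℕ} {g : Fin k → V} :
    IsCliqueExtension G u v g ↔ IsCliqueExtension G v u g := by
  constructor <;> exact fun ⟨huv, hu, hv, hg⟩ => ⟨huv.symm, hv, hu, hg⟩

/-- `M_{G,q}` is `cliqueMatrix G (q - 2)`; the other vertices of a clique through `uv` are counted
as ordered tuples, as they are by homomorphisms. -/
noncomputable def cliqueMatrix (G : SimpleGraph V) (k : ℕ) : Matrix V V ℝ :=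
  Matrix.of fun u v => Nat.card {g : Fin k → V // IsCliqueExtension G u v g}

theorem cliqueMatrix_apply_of_not_adj {G : SimpleGraph V} {u v : V} (h : ¬G.Adj u v) (k : ℕ) :
    cliqueMatrix G k u v = 0 := by
  have : IsEmpty {g : Fin k → V // IsCliqueExtension G u v g} := ⟨fun g => h g.2.1⟩
  simp [cliqueMatrix]

theorem isHermitian_cliqueMatrix (G : SimpleGraph V) (k : ℕ) : (cliqueMatrix G k).IsHermitian :=
  Matrix.IsHermitian.ext fun u v => by
    simp only [cliqueMatrix, of_apply, star_trivial]
    exact Nat.cast_inj.mpr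
      (Nat.card_congr (Equiv.subtypeEquivRight fun _ => isCliqueExtension_comm))

def necklaceHomEquiv {c : ℕ} (hc : 1 < c) (q : ℕ) (G : SimpleGraph V) :
    (necklace c q →g G) ≃ Σ f : ZMod c → V,
      ∀ t, {g : Fin (q - 2) → V // IsCliqueExtension G (f t) (f (t + 1)) g} where
  toFun φ :=
    haveI := ZMod.nontrivial_iff.mpr hc.ne'
    ⟨fun t => φ (.inl t), fun t => ⟨fun s => φ (.inr (t, s)),
      φ.map_adj (show (necklace c q).Adj (.inl t) (.inl (t + 1)) from
        ⟨by simp, Or.inr (by ring)⟩),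
      fun s => φ.map_adj (Or.inl rfl), fun s => φ.map_adj (Or.inr rfl),
      fun s s' hss => φ.map_adj ⟨rfl, hss⟩⟩⟩
  invFun fg :=
    { toFun := Sum.elim fg.1 fun p => (fg.2 p.1).1 p.2
      map_rel' := by
        rintro (a | ⟨t, s⟩) (b | ⟨t', s'⟩) hab
        · obtain ⟨-, h | h⟩ := hab
          · rw [sub_eq_iff_eq_add'.mp h]
            exact (fg.2 b).2.1.symm
          · rw [sub_eq_iff_eq_add'.mp h]
            exact (fg.2 a).2.1
        · obtain rfl | rfl := hab
          exacts [(fg.2 _).2.2.1 _, (fg.2 _).2.2.2.1 _]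
        · obtain rfl | rfl := hab
          exacts [((fg.2 _).2.2.1 _).symm, ((fg.2 _).2.2.2.1 _).symm]
        · obtain ⟨rfl, hss⟩ := hab
          exact (fg.2 t).2.2.2.2 hss }
  left_inv φ := by
    ext (a | ⟨t, s⟩) <;> rfl
  right_inv fg := rfl

theorem homCount_necklace_eq_trace_pow [Fintype V] [DecidableEq V] {c : ℕ} (hc : 1 < c) (q : ℕ)
    (G : SimpleGraph V) :
    (homCount (necklace c q) G : ℝ) = trace (cliqueMatrix G (q - 2) ^ c) := by
  have : NeZero c := ⟨by omega⟩
  rw [trace_pow_eq_sum_prod, homCount, Nat.card_congr (necklaceHomEquiv hc q G), Nat.card_sigma]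
  simp [Nat.card_pi, cliqueMatrix]

theorem homCount_necklace_eq_sum_eigenvalues_pow [Fintype V] [DecidableEq V] {c : ℕ} (hc : 1 < c)
    (q : ℕ) (G : SimpleGraph V) :
    (homCount (necklace c q) G : ℝ) =
      ∑ i, (isHermitian_cliqueMatrix G (q - 2)).eigenvalues i ^ c := by
  rw [homCount_necklace_eq_trace_pow hc,
    (isHermitian_cliqueMatrix G _).trace_pow_eq_sum_eigenvalues_pow]
  rfl

end CliqueMatrix

theorem Matrix.trace_pow_of_one_sub_one {n R : Type*} [Fintype n] [DecidableEq n] [CommRing R]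
    (c : ℕ) :
    trace (((of fun _ _ => 1 : Matrix n n R) - 1) ^ c) =
      ((Fintype.card n : R) - 1) ^ c + ((Fintype.card n : R) - 1) * (-1) ^ c := by
  set J : Matrix n n R := of fun _ _ => 1
  set d : R := (Fintype.card n : R)
  have hJJ : J * J = d • J := by
    ext
    simp [J, d, mul_apply]
  have key : ∃ a : R, (J - 1) ^ c = a • J + (-1) ^ c • 1 ∧ d * a = (d - 1) ^ c - (-1) ^ c := by
    induction c with
    | zero => exact ⟨0, by simp, by simp⟩
    | succ c ih =>
      obtain ⟨a, hpow, ha⟩ := ih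
      refine ⟨a * (d - 1) + (-1) ^ c, ?_, by linear_combination (d - 1) * ha⟩
      rw [pow_succ, hpow, mul_sub, mul_one, add_mul, smul_mul_assoc, smul_mul_assoc, one_mul, hJJ,
        smul_smul]
      module
  obtain ⟨a, hpow, ha⟩ := key
  have htrJ : trace J = d := by simp [J, d, trace]
  rw [hpow, trace_add, trace_smul, trace_smul, htrJ, trace_one]
  simp only [smul_eq_mul]
  linear_combination ha

section CliqueUnion

variable {ι : Type*}

def cliqueUnion (m : ι → ℕ) : SimpleGraph (Σ i, Fin (m i)) where
  Adj a b := a.1 = b.1 ∧ a ≠ b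
  symm := ⟨fun _ _ h => ⟨h.1.symm, h.2.symm⟩⟩
  loopless := ⟨fun _ h => h.2 rfl⟩

variable [Fintype ι] [DecidableEq ι]

theorem card_cliqueExtension_cliqueUnion (m : ι → ℕ) {i : ι} {u v : Fin (m i)}
    (huv : u ≠ v) (k : ℕ) :
    Nat.card {g : Fin k → Σ i, Fin (m i) // IsCliqueExtension (cliqueUnion m) ⟨i, u⟩ ⟨i, v⟩ g} =
      (m i - 2).descFactorial k := by
  set S := {w : Σ i, Fin (m i) // w.1 = i ∧ w ≠ ⟨i, u⟩ ∧ w ≠ ⟨i, v⟩}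
  have hS : Fintype.card S = m i - 2 := by
    have : ({w | w.1 = i ∧ w ≠ ⟨i, u⟩ ∧ w ≠ ⟨i, v⟩} : Finset (Σ i, Fin (m i))) =
        ({u, v}ᶜ : Finset (Fin (m i))).map (.sigmaMk i) := by
      ext ⟨j, x⟩
      simp only [Finset.mem_filter, Finset.mem_univ, true_and, Finset.mem_map, Finset.mem_compl]
      constructor
      · rintro ⟨rfl, hu, hv⟩
        simp_all
      · rintro ⟨y, hy, ⟨⟩⟩
        simp_all
    rw [Fintype.card_subtype, this, Finset.card_map, Finset.card_compl, Finset.card_pair huv,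
      Fintype.card_fin]
  have e : {g : Fin k → Σ i, Fin (m i) // IsCliqueExtension (cliqueUnion m) ⟨i, u⟩ ⟨i, v⟩ g} ≃
      (Fin k ↪ S) :=
    { toFun g := ⟨fun s => ⟨g.1 s, (g.2.2.1 s).1.symm, (g.2.2.1 s).2.symm, (g.2.2.2.1 s).2.symm⟩,
        fun s s' h => by_contra fun hss => (g.2.2.2.2 hss).2 (congrArg Subtype.val h)⟩
      invFun e := ⟨fun s => e s, ⟨rfl, by simpa using huv⟩,
        fun s => ⟨(e s).2.1.symm, (e s).2.2.1.symm⟩,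
        fun s => ⟨(e s).2.1.symm, (e s).2.2.2.symm⟩,
        fun s s' hss => ⟨(e s).2.1.trans (e s').2.1.symm,
          fun h => hss (e.injective (Subtype.ext h))⟩⟩
      left_inv _ := rfl
      right_inv _ := rfl }
  rw [Nat.card_congr e, Nat.card_eq_fintype_card, Fintype.card_embedding_eq, Fintype.card_fin, hS]

theorem cliqueMatrix_cliqueUnion (m : ι → ℕ) (k : ℕ) :
    cliqueMatrix (cliqueUnion m) k =
      blockDiagonal' fun i => ((m i - 2).descFactorial k : ℝ) • ((of fun _ _ => 1) - 1) := by
  ext ⟨i, u⟩ ⟨j, v⟩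
  by_cases hij : i = j
  · subst hij
    rw [blockDiagonal'_apply_eq]
    by_cases huv : u = v
    · subst huv
      simp [cliqueMatrix_apply_of_not_adj ((cliqueUnion m).loopless.irrefl _)]
    · simp [cliqueMatrix, card_cliqueExtension_cliqueUnion m huv, huv]
  · have : ¬(cliqueUnion m).Adj ⟨i, u⟩ ⟨j, v⟩ := fun h => hij h.1
    rw [blockDiagonal'_apply_ne _ _ _ hij, cliqueMatrix_apply_of_not_adj this]

theorem trace_cliqueMatrix_cliqueUnion_pow (m : ι → ℕ) (k c : ℕ) :
    trace (cliqueMatrix (cliqueUnion m) k ^ c) =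
      ∑ i, ((m i - 2).descFactorial k : ℝ) ^ c *
        (((m i : ℝ) - 1) ^ c + ((m i : ℝ) - 1) * (-1) ^ c) := by
  rw [cliqueMatrix_cliqueUnion, ← blockDiagonal'_pow, trace_blockDiagonal']
  simp [smul_pow, trace_pow_of_one_sub_one]

end CliqueUnion

theorem tendsto_descFactorial_div_pow {α : Type*} {l : Filter α} {s : α → ℝ} {a : α → ℕ} {z : ℝ}
    (hs : Tendsto s l atTop) (ha : Tendsto (fun x => (a x : ℝ) / s x) l (𝓝 z)) (k : ℕ) :
    Tendsto (fun x => ((a x).descFactorial k : ℝ) / s x ^ k) l (𝓝 (z ^ k)) := by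
  induction k with
  | zero => simpa using tendsto_const_nhds
  | succ k ih =>
    have hk : Tendsto (fun x => ((a x : ℝ) - k) / s x) l (𝓝 z) := by
      simpa [sub_div] using ha.sub (tendsto_const_nhds.div_atTop hs)
    refine (ih.mul hk).congr fun x => ?_
    rw [div_mul_div_comm, ← pow_succ, ← descPochhammer_eval_eq_descFactorial ℝ,
      ← descPochhammer_eval_eq_descFactorial ℝ, descPochhammer_succ_eval]

theorem tendsto_trace_cliqueMatrix_cliqueUnion_pow {ι : Type*} [Fintype ι] [DecidableEq ι]
    {z : ι → ℝ} (hz : ∀ i, 0 ≤ z i) (k : ℕ) {c : ℕ} (hc : 1 < c) :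
    Tendsto (fun t : ℝ => trace (cliqueMatrix (cliqueUnion fun i => ⌈z i * t⌉₊ + 2) k ^ c) /
      (t ^ (k + 1)) ^ c) atTop (𝓝 (∑ i, (z i ^ (k + 1)) ^ c)) := by
  obtain ⟨c, rfl⟩ : ∃ c', c = c' + 2 := ⟨c - 2, by omega⟩
  simp only [trace_cliqueMatrix_cliqueUnion_pow, Finset.sum_div]
  refine tendsto_finsetSum _ fun i _ => ?_
  have hceil : Tendsto (fun t : ℝ => (⌈z i * t⌉₊ : ℝ) / t) atTop (𝓝 (z i)) :=
    tendsto_nat_ceil_mul_div_atTop (hz i)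
  have hdesc := tendsto_descFactorial_div_pow tendsto_id hceil k
  have hsize : Tendsto (fun t : ℝ => ((⌈z i * t⌉₊ : ℝ) + 1) / t) atTop (𝓝 (z i)) := by
    simpa [add_div] using hceil.add ((tendsto_const_nhds (x := (1 : ℝ))).div_atTop tendsto_id)
  have hinv := (tendsto_inv_atTop_zero (𝕜 := ℝ)).pow (c + 1)
  -- the summand `(mᵢ - 1) (-1)^c` of the trace is only `O(t)`, negligible against `t^c` as `c ≥ 2`
  have hlim := (hdesc.pow (c + 2)).mul
    ((hsize.pow (c + 2)).add ((hsize.mul_const ((-1) ^ c)).mul hinv))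
  rw [zero_pow (Nat.succ_ne_zero c), mul_zero, add_zero, ← mul_pow, ← pow_succ] at hlim
  refine hlim.congr' ?_
  filter_upwards [eventually_gt_atTop 0] with t ht
  simp only [id, Nat.add_sub_cancel]
  push_cast
  generalize (⌈z i * t⌉₊ : ℝ) = C
  generalize ((⌈z i * t⌉₊.descFactorial k : ℕ) : ℝ) = D
  rw [show C + 2 - 1 = C + 1 by ring, show (-1 : ℝ) ^ (c + 2) = (-1) ^ c by ring, pow_succ t k,
    mul_pow, div_pow, div_pow, inv_pow, pow_succ t (c + 1)]
  have : t ^ (c + 1) ≠ 0 := pow_ne_zero _ ht.ne'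
  have : t ^ k ≠ 0 := pow_ne_zero _ ht.ne'
  field_simp

noncomputable def powerSumRatio (ℓ : ℕ) {ι : Type*} [Fintype ι] (y : ι → ℝ) : Fin (ℓ - 1) → ℝ :=
  fun j => (∑ i, y i ^ ((j : ℕ) + 2)) / (∑ i, y i) ^ ((j : ℕ) + 2)

noncomputable def necklaceRatio (q ℓ : ℕ) {V : Type*} (G : SimpleGraph V) : Fin (ℓ - 1) → ℝ :=
  fun j => (homCount (necklace (4 * ((j : ℕ) + 2)) q) G : ℝ) /
    (homCount (necklace 4 q) G : ℝ) ^ ((j : ℕ) + 2)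

theorem powerSumRatio_mem_powerSumProfile (ℓ : ℕ) {ι : Type*} [Fintype ι] {y : ι → ℝ}
    (hy : ∀ i, 0 ≤ y i) (hsum : ∑ i, y i ≠ 0) : powerSumRatio ℓ y ∈ powerSumProfile ℓ := by
  let e := Fintype.equivFin ι
  have hsum_nonneg : 0 ≤ ∑ i, y i := Finset.sum_nonneg fun i _ => hy i
  refine subset_closure ⟨_, fun i => y (e.symm i) / ∑ i, y i,
    fun i => div_nonneg (hy _) hsum_nonneg, ?_, fun j => ?_⟩
  · rw [← Finset.sum_div, e.symm.sum_comp, div_self hsum]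
  · simp only [powerSumRatio, div_pow, ← Finset.sum_div]
    rw [e.symm.sum_comp (fun i => y i ^ ((j : ℕ) + 2))]

theorem necklaceRatio_eq_powerSumRatio (q ℓ : ℕ) {V : Type*} [Fintype V] [DecidableEq V]
    (G : SimpleGraph V) :
    necklaceRatio q ℓ G =
      powerSumRatio ℓ fun i => (isHermitian_cliqueMatrix G (q - 2)).eigenvalues i ^ 4 := by
  ext j
  simp only [necklaceRatio, powerSumRatio, pow_mul,
    homCount_necklace_eq_sum_eigenvalues_pow (by omega : 1 < 4),
    homCount_necklace_eq_sum_eigenvalues_pow (by omega : 1 < 4 * ((j : ℕ) + 2))]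

theorem powerSums_mem_closure_necklaceRatio (q ℓ : ℕ) {n : ℕ} {x : Fin n → ℝ}
    (hx : ∀ i, 0 ≤ x i) (hsum : ∑ i, x i = 1) :
    (fun j : Fin (ℓ - 1) => ∑ i, x i ^ ((j : ℕ) + 2)) ∈
      closure {v | ∃ (V : Type) (_ : Fintype V) (G : SimpleGraph V),
        homCount (necklace 4 q) G ≠ 0 ∧ ∀ j, v j = necklaceRatio q ℓ G j} := by
  set k := q - 2
  set z : Fin n → ℝ := fun i => x i ^ ((4 * (k + 1) : ℕ) : ℝ)⁻¹
  have hz i : (z i ^ (k + 1)) ^ 4 = x i := by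
    rw [← pow_mul, mul_comm]
    exact Real.rpow_inv_natCast_pow (hx i) (by omega)
  set G := fun t : ℝ => cliqueUnion fun i => ⌈z i * t⌉₊ + 2
  have hF c (hc : 1 < c) :
      Tendsto (fun t => (homCount (necklace c q) (G t) : ℝ) / (t ^ (k + 1)) ^ c)
        atTop (𝓝 (∑ i, (z i ^ (k + 1)) ^ c)) := by
    simpa only [homCount_necklace_eq_trace_pow hc] using
      tendsto_trace_cliqueMatrix_cliqueUnion_pow (fun i => Real.rpow_nonneg (hx i) _) k hc
  have hF4 : Tendsto (fun t => (homCount (necklace 4 q) (G t) : ℝ) / (t ^ (k + 1)) ^ 4)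
      atTop (𝓝 1) := by
    simpa only [hz, hsum] using hF 4 (by norm_num)
  refine mem_closure_of_tendsto (b := atTop) (f := fun t => necklaceRatio q ℓ (G t))
    (tendsto_pi_nhds.2 fun j => ?_) ?_
  · have hlim := (hF _ (by omega : 1 < 4 * ((j : ℕ) + 2))).div (hF4.pow ((j : ℕ) + 2)) (by simp)
    simp only [pow_mul, hz, one_pow, div_one] at hlim
    refine hlim.congr' ?_
    filter_upwards [eventually_gt_atTop 0] with t ht
    rw [Pi.div_apply, div_pow, div_div_div_cancel_right₀ (by positivity)]
    rfl
  · filter_upwards [hF4.eventually_ne one_ne_zero] with t ht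
    exact ⟨_, inferInstance, G t, fun h => ht (by simp [h]), fun j => rfl⟩

theorem necklace_ratio_profile_eq_powerSumProfile_general (q ℓ : ℕ) :
    closure {v : Fin (ℓ - 1) → ℝ | ∃ (V : Type) (_ : Fintype V) (G : SimpleGraph V),
        homCount (necklace 4 q) G ≠ 0 ∧
        ∀ j : Fin (ℓ - 1), v j =
          (homCount (necklace (4 * ((j : ℕ) + 2)) q) G : ℝ) /
            (homCount (necklace 4 q) G : ℝ) ^ ((j : ℕ) + 2)} = powerSumProfile ℓ := by
  refine (closure_minimal ?_ isClosed_closure).antisymm (closure_minimal ?_ isClosed_closure)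
  · rintro v ⟨V, _, G, hG, hv⟩
    classical
    obtain rfl : v = necklaceRatio q ℓ G := funext hv
    rw [necklaceRatio_eq_powerSumRatio]
    refine powerSumRatio_mem_powerSumProfile ℓ (fun i => by positivity) ?_
    rwa [← homCount_necklace_eq_sum_eigenvalues_pow (by norm_num), Nat.cast_ne_zero]
  · rintro v ⟨n, x, hx, hsum, hv⟩
    obtain rfl : v = fun j : Fin (ℓ - 1) => ∑ i, x i ^ ((j : ℕ) + 2) := funext hv
    exact powerSums_mem_closure_necklaceRatio q ℓ hx hsum

/-- The necklace ratio profile for fixed `q` equals the power-sum profile: for `q ≥ 2` and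
`ℓ ≥ 2`, the closure of the points
`(hom(N_{8,q};G)/hom(N_{4,q};G)^2, …, hom(N_{4ℓ,q};G)/hom(N_{4,q};G)^ℓ)` over all finite
simple graphs `G` with `hom(N_{4,q};G) ≠ 0` equals `Π_ℓ`. -/
theorem necklace_ratio_profile_eq_powerSumProfile (q ℓ : ℕ) (hq : 2 ≤ q) (hℓ : 2 ≤ ℓ) :
    closure {v : Fin (ℓ - 1) → ℝ | ∃ (V : Type) (_ : Fintype V) (G : SimpleGraph V),
        homCount (necklace 4 q) G ≠ 0 ∧
        ∀ j : Fin (ℓ - 1), v j =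
          (homCount (necklace (4 * ((j : ℕ) + 2)) q) G : ℝ) /
            (homCount (necklace 4 q) G : ℝ) ^ ((j : ℕ) + 2)} = powerSumProfile ℓ :=
  necklace_ratio_profile_eq_powerSumProfile_general q ℓ
end
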